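/- Let G be a group, H a subgroup of G with N_G(H) = H, and σ : G → G a group automorphism with σ ∘ σ = id. Then: (1) there exists a σ-equivariant real structure on G/H if and only if σ(H) = c·H·c⁻¹ for some c ∈ G; (2) there is at most one σ-equivariant real structure on G/H, and when it exists it is the map gH ↦ σ(g)·c·H for any c ∈ G with σ(H) = c·H·c⁻¹. -/

import Mathlib

/-- A `σ`-equivariant real structure on the homogeneous space `G/H`: a map
`μ : G/H → G/H` with `μ ∘ μ = id` and `μ(g·x) = σ(g)·μ(x)`. -/
def IsEquivRealStructure {G : Type*} [Group G] (σ : G →* G) (H : Subgroup G)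
    (μ : G ⧸ H → G ⧸ H) : Prop :=
  (∀ x, μ (μ x) = x) ∧ ∀ (g : G) (x : G ⧸ H), μ (g • x) = σ g • μ x

/-!
A `σ`-equivariant map `μ` carries stabilizers to their images under `σ`: the stabilizer of `μ x`
is `σ` of the stabilizer of `x`. At the base point `x = H`, with `μ H = cH`, this says
`σ(H) = cHc⁻¹`, and equivariance forces `μ (gH) = σ(g)cH`. Since `N_G(H) = H`, the coset `cH` is
determined by the subgroup `cHc⁻¹ = σ(H)`, whence uniqueness. Conversely, for such a `c` the
element `σ(c)c` conjugates `H` to `σ(σ(H)) = H`, so it lies in `N_G(H) = H`, and this is exactly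
what makes `gH ↦ σ(g)cH` an involution.
-/

section

variable {G : Type*} [Group G]

theorem Subgroup.map_conj_map_conj (H : Subgroup G) (a b : G) :
    (H.map (MulAut.conj a).toMonoidHom).map (MulAut.conj b).toMonoidHom =
      H.map (MulAut.conj (b * a)).toMonoidHom := by
  rw [Subgroup.map_map]
  congr 1
  ext
  simp [mul_assoc]

theorem Subgroup.map_map_conj (σ : G →* G) (H : Subgroup G) (c : G) :
    (H.map (MulAut.conj c).toMonoidHom).map σ =
      (H.map σ).map (MulAut.conj (σ c)).toMonoidHom := by
  rw [Subgroup.map_map, Subgroup.map_map]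
  congr 1
  ext
  simp

theorem Subgroup.map_map_of_involutive {σ : G →* G} (hσ : ∀ g, σ (σ g) = g)
    (H : Subgroup G) : (H.map σ).map σ = H := by
  rw [Subgroup.map_map, show σ.comp σ = MonoidHom.id G from MonoidHom.ext hσ, Subgroup.map_id]

theorem QuotientGroup.mk_eq_mk_of_map_conj_eq {H : Subgroup G}
    (hN : Subgroup.normalizer (H : Set G) = H) {c c' : G}
    (h : H.map (MulAut.conj c).toMonoidHom = H.map (MulAut.conj c').toMonoidHom) :
    (c : G ⧸ H) = c' := by
  rw [QuotientGroup.eq, ← hN, Subgroup.mem_normalizer_iff_map_conj_eq,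
    ← MulEquiv.toMonoidHom_eq_coe, ← Subgroup.map_conj_map_conj, ← h,
    Subgroup.map_conj_map_conj, inv_mul_cancel]
  ext
  simp

theorem MulAction.map_stabilizer_eq_stabilizer_apply {X : Type*} [MulAction G X]
    {σ : G →* G} (hσ : ∀ g, σ (σ g) = g) {μ : X → X} (hμμ : ∀ x, μ (μ x) = x)
    (hμ : ∀ (g : G) (x : X), μ (g • x) = σ g • μ x) (x : X) :
    (stabilizer G x).map σ = stabilizer G (μ x) := by
  ext g
  constructor
  · rintro ⟨k, hk, rfl⟩
    rw [mem_stabilizer_iff, ← hμ, hk]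
  · intro hg
    refine ⟨σ g, ?_, hσ g⟩
    calc σ g • x = σ g • μ (μ x) := by rw [hμμ]
      _ = μ (g • μ x) := (hμ _ _).symm
      _ = x := by rw [hg, hμμ]

variable {H : Subgroup G} {σ : G →* G}

theorem apply_mul_mem_of_map_eq_map_conj (hσ : ∀ g, σ (σ g) = g)
    (hN : Subgroup.normalizer (H : Set G) = H) {c : G}
    (hc : H.map σ = H.map (MulAut.conj c).toMonoidHom) : σ c * c ∈ H := by
  rw [← hN, Subgroup.mem_normalizer_iff_map_conj_eq, ← MulEquiv.toMonoidHom_eq_coe,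
    ← Subgroup.map_conj_map_conj, ← hc, ← Subgroup.map_map_conj, ← hc,
    Subgroup.map_map_of_involutive hσ]

theorem exists_isEquivRealStructure (hσ : ∀ g, σ (σ g) = g) {c : G}
    (hc : H.map σ ≤ H.map (MulAut.conj c).toMonoidHom) (hcc : σ c * c ∈ H) :
    ∃ μ : G ⧸ H → G ⧸ H, IsEquivRealStructure σ H μ := by
  refine ⟨Quotient.map' (fun g ↦ σ g * c) fun a b hab ↦ ?_, fun x ↦ ?_, fun g x ↦ ?_⟩
  · rw [QuotientGroup.leftRel_apply] at hab ⊢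
    obtain ⟨k, hk, hk_eq⟩ := hc (Subgroup.mem_map_of_mem σ hab)
    have : (σ a * c)⁻¹ * (σ b * c) = c⁻¹ * σ (a⁻¹ * b) * c := by simp [mul_assoc]
    rw [this, ← hk_eq]
    simpa [MulAut.conj_apply, mul_assoc] using hk
  · induction x using QuotientGroup.induction_on with
    | H g =>
      change ((σ (σ g * c) * c : G) : G ⧸ H) = g
      rw [QuotientGroup.eq, map_mul, hσ]
      simpa [mul_assoc] using H.inv_mem hcc
  · induction x using QuotientGroup.induction_on with
    | H a =>
      change ((σ (g * a) * c : G) : G ⧸ H) = σ g • ((σ a * c : G) : G ⧸ H)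
      rw [MulAction.Quotient.smul_coe, smul_eq_mul, map_mul, mul_assoc]

namespace IsEquivRealStructure

variable {μ : G ⧸ H → G ⧸ H}

theorem apply_mk (hμ : IsEquivRealStructure σ H μ) {c : G}
    (hc : μ ((1 : G) : G ⧸ H) = c) (g : G) : μ g = ((σ g * c : G) : G ⧸ H) := by
  have hg : (g : G ⧸ H) = g • ((1 : G) : G ⧸ H) := by
    rw [MulAction.Quotient.smul_coe, smul_eq_mul, mul_one]
  rw [hg, hμ.2, hc, MulAction.Quotient.smul_coe, smul_eq_mul]

theorem map_eq_map_conj (hσ : ∀ g, σ (σ g) = g) (hμ : IsEquivRealStructure σ H μ) {c : G}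
    (hc : μ ((1 : G) : G ⧸ H) = c) : H.map σ = H.map (MulAut.conj c).toMonoidHom := by
  have h := MulAction.map_stabilizer_eq_stabilizer_apply hσ hμ.1 hμ.2 ((1 : G) : G ⧸ H)
  rwa [hc, ← mul_one c, ← smul_eq_mul, ← MulAction.Quotient.smul_coe,
    MulAction.stabilizer_smul_eq_stabilizer_map_conj, MulAction.stabilizer_quotient] at h

theorem exists_map_eq_map_conj (hσ : ∀ g, σ (σ g) = g) (hμ : IsEquivRealStructure σ H μ) :
    ∃ c : G, H.map σ = H.map (MulAut.conj c).toMonoidHom := by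
  obtain ⟨c, hc⟩ := QuotientGroup.mk_surjective (μ ((1 : G) : G ⧸ H))
  exact ⟨c, hμ.map_eq_map_conj hσ hc.symm⟩

theorem apply_mk_eq (hσ : ∀ g, σ (σ g) = g) (hN : Subgroup.normalizer (H : Set G) = H)
    (hμ : IsEquivRealStructure σ H μ) {c : G}
    (hc : H.map σ = H.map (MulAut.conj c).toMonoidHom) (g : G) :
    μ g = ((σ g * c : G) : G ⧸ H) := by
  obtain ⟨c₀, hc₀⟩ := QuotientGroup.mk_surjective (μ ((1 : G) : G ⧸ H))
  have hcoset : (c₀ : G ⧸ H) = c :=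
    QuotientGroup.mk_eq_mk_of_map_conj_eq hN ((hμ.map_eq_map_conj hσ hc₀.symm).symm.trans hc)
  rw [hμ.apply_mk (hc₀.symm.trans hcoset)]

end IsEquivRealStructure

end

/-- **Corollary 2.9.** Suppose `N_G(H) = H`. Then (1) `G/H` admits a `σ`-equivariant
real structure iff `σ(H) = c·H·c⁻¹` for some `c ∈ G`; (2) there is at most one
`σ`-equivariant real structure on `G/H`, and when it exists it is the map
`gH ↦ σ(g)·c·H` for any `c` with `σ(H) = c·H·c⁻¹`. -/
theorem equivRealStructure_of_selfNormalizing {G : Type*} [Group G] (H : Subgroup G)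
    (σ : G →* G) (hσ : ∀ g, σ (σ g) = g) (hN : Subgroup.normalizer (H : Set G) = H) :
    ((∃ μ : G ⧸ H → G ⧸ H, IsEquivRealStructure σ H μ) ↔
      ∃ c : G, H.map σ = H.map (MulAut.conj c).toMonoidHom) ∧
    (∀ μ μ' : G ⧸ H → G ⧸ H,
      IsEquivRealStructure σ H μ → IsEquivRealStructure σ H μ' → μ = μ') ∧
    (∀ c : G, H.map σ = H.map (MulAut.conj c).toMonoidHom →
      ∀ μ : G ⧸ H → G ⧸ H, IsEquivRealStructure σ H μ →
        ∀ g : G, μ (g : G ⧸ H) = ((σ g * c : G) : G ⧸ H)) := by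
  refine ⟨⟨fun ⟨_, hμ⟩ ↦ hμ.exists_map_eq_map_conj hσ, fun ⟨c, hc⟩ ↦ ?_⟩, ?_,
    fun c hc μ hμ ↦ hμ.apply_mk_eq hσ hN hc⟩
  · exact exists_isEquivRealStructure hσ hc.le (apply_mul_mem_of_map_eq_map_conj hσ hN hc)
  · intro μ μ' hμ hμ'
    obtain ⟨c, hc⟩ := hμ.exists_map_eq_map_conj hσ
    funext x
    induction x using QuotientGroup.induction_on with
    | H g => rw [hμ.apply_mk_eq hσ hN hc, hμ'.apply_mk_eq hσ hN hc]
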